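/- arXiv:1601.06104 — 4 statements merged into one kernel-verified Lean document; each statement's English description precedes it below -/
import Mathlib

section
/- Let $\mathfrak{L} = \bigoplus_{\alpha \in G}\mathfrak{L}_\alpha$ be a Lie algebra graded over a totally ordered abelian group $G$ with grading operator making each $\mathfrak{L}_\alpha$ a weight space, and suppose that for every pair of linearly independent homogeneous elements $x_\alpha \in \mathfrak{L}_\alpha$, $y_\beta \in \mathfrak{L}_\beta$ with $\alpha,\beta > 0$, one has $[x_\alpha, y_\beta] \neq 0$. Then the positive part $\mathfrak{L}^+ = \bigoplus_{\alpha > 0} \mathfrak{L}_\alpha$ is completely self-centralizing: for any two linearly independent elements $x, y \in \mathfrak{L}^+$, $[x,y] \neq 0$. -/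
section Aux

variable {F : Type*} [Field F] {L : Type*} [LieRing L] [LieAlgebra F L]
    {G : Type*} [AddCommGroup G] [LinearOrder G] [IsOrderedAddMonoid G]
    (ℒ : G → Submodule F L)

/-- A nonzero element cannot lie in two distinct graded pieces. -/
theorem aux_disjoint' (hinternal : DirectSum.IsInternal ℒ) {a b : G} (hab : a ≠ b)
    {w : L} (h1 : w ∈ ℒ a) (h2 : w ∈ ℒ b) : w = 0 :=
  Submodule.disjoint_def.mp (hinternal.submodule_iSupIndep.pairwiseDisjoint hab) w h1 h2

/-- Existence of a minimal degree with nonzero coefficient. -/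
theorem aux_min_exists {S : Finset G} {u : G → L} {z : L} (hz : z ≠ 0)
    (hzeq : z = ∑ a ∈ S, u a) :
    ∃ α ∈ S, u α ≠ 0 ∧ ∀ a ∈ S, u a ≠ 0 → α ≤ a := by
  classical
  have hN : (S.filter (fun a => u a ≠ 0)).Nonempty := by
    rw [Finset.filter_nonempty_iff]
    by_contra h
    push_neg at h
    exact hz (hzeq.trans (Finset.sum_eq_zero h))
  have hmem := Finset.min'_mem _ hN
  rw [Finset.mem_filter] at hmem
  exact ⟨_, hmem.1, hmem.2, fun a ha hne =>
    Finset.min'_le _ a (Finset.mem_filter.mpr ⟨ha, hne⟩)⟩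

/-- The key lemma: if the lowest-degree homogeneous components of two elements of the
positive part are linearly independent, then the bracket of the elements is nonzero. -/
theorem aux_key
    (hinternal : DirectSum.IsInternal ℒ)
    (hgraded : ∀ a b : G, ∀ x ∈ ℒ a, ∀ y ∈ ℒ b, ⁅x, y⁆ ∈ ℒ (a + b))
    (hhom : ∀ (a b : G), 0 < a → 0 < b → ∀ x ∈ ℒ a, ∀ y ∈ ℒ b,
      LinearIndependent F ![x, y] → ⁅x, y⁆ ≠ 0)
    {S T : Finset G} {u v : G → L}
    (huS : ∀ a ∈ S, u a ∈ ℒ a) (hvT : ∀ b ∈ T, v b ∈ ℒ b)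
    (hSpos : ∀ a ∈ S, 0 < a) (hTpos : ∀ b ∈ T, 0 < b)
    {α β : G} (hαS : α ∈ S) (hβT : β ∈ T)
    (hαmin : ∀ a ∈ S, u a ≠ 0 → α ≤ a) (hβmin : ∀ b ∈ T, v b ≠ 0 → β ≤ b)
    (hind : LinearIndependent F ![u α, v β]) :
    ⁅∑ a ∈ S, u a, ∑ b ∈ T, v b⁆ ≠ 0 := by
  classical
  set Dsymm := (LinearEquiv.ofBijective (DirectSum.coeLinearMap ℒ) hinternal).symm with hD
  set proj : G → L →ₗ[F] L := fun c =>
    (ℒ c).subtype ∘ₗ (DirectSum.component F G (fun a => ↥(ℒ a)) c) ∘ₗ Dsymm.toLinearMap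
    with hprojdef
  have hproj_same : ∀ c : G, ∀ w ∈ ℒ c, proj c w = w := by
    intro c w hw
    have := hinternal.ofBijective_coeLinearMap_of_mem hw
    simp only [hprojdef, LinearMap.coe_comp, Function.comp_apply, LinearEquiv.coe_coe,
      Submodule.coe_subtype, ← DirectSum.apply_eq_component]
    rw [this]
  have hproj_ne : ∀ c c' : G, c' ≠ c → ∀ w ∈ ℒ c', proj c w = 0 := by
    intro c c' hne w hw
    have := hinternal.ofBijective_coeLinearMap_of_mem_ne hne hw
    simp only [hprojdef, LinearMap.coe_comp, Function.comp_apply, LinearEquiv.coe_coe,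
      Submodule.coe_subtype, ← DirectSum.apply_eq_component]
    rw [this]; rfl
  have huα : u α ≠ 0 := by
    have := hind.ne_zero 0; simpa using this
  have hvβ : v β ≠ 0 := by
    have := hind.ne_zero 1; simpa using this
  have hbrac : ⁅u α, v β⁆ ≠ 0 :=
    hhom α β (hSpos α hαS) (hTpos β hβT) (u α) (huS α hαS) (v β) (hvT β hβT) hind
  intro h0
  apply hbrac
  have hexp : ⁅∑ a ∈ S, u a, ∑ b ∈ T, v b⁆ = ∑ a ∈ S, ∑ b ∈ T, ⁅u a, v b⁆ := by
    have h1 : ∀ z : L, ⁅∑ a ∈ S, u a, z⁆ = ∑ a ∈ S, ⁅u a, z⁆ := fun z =>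
      map_sum (AddMonoidHom.mk' (fun w => ⁅w, z⁆) (fun w₁ w₂ => add_lie w₁ w₂ z)) u S
    have h2 : ∀ w : L, ⁅w, ∑ b ∈ T, v b⁆ = ∑ b ∈ T, ⁅w, v b⁆ := fun w =>
      map_sum (AddMonoidHom.mk' (fun z => ⁅w, z⁆) (fun z₁ z₂ => lie_add w z₁ z₂)) v T
    rw [h1]; exact Finset.sum_congr rfl fun a _ => h2 (u a)
  have hcomp : proj (α + β) ⁅∑ a ∈ S, u a, ∑ b ∈ T, v b⁆ = ⁅u α, v β⁆ := by
    rw [hexp, map_sum]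
    rw [Finset.sum_eq_single_of_mem α hαS]
    · rw [map_sum, Finset.sum_eq_single_of_mem β hβT]
      · exact hproj_same _ _ (hgraded α β _ (huS α hαS) _ (hvT β hβT))
      · intro b hb hbne
        by_cases hvb : v b = 0
        · simp [hvb]
        · have hgt : β < b := lt_of_le_of_ne (hβmin b hb hvb) (Ne.symm hbne)
          exact hproj_ne _ _ (by exact ne_of_gt (by exact add_lt_add_right hgt α)) _
            (hgraded α b _ (huS α hαS) _ (hvT b hb))
    · intro a ha hane
      by_cases hua : u a = 0
      · simp [hua]
      · have hgt : α < a := lt_of_le_of_ne (hαmin a ha hua) (Ne.symm hane)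
        rw [map_sum]
        apply Finset.sum_eq_zero
        intro b hb
        by_cases hvb : v b = 0
        · simp [hvb]
        · have hge : β ≤ b := hβmin b hb hvb
          have : α + β < a + b := add_lt_add_of_lt_of_le hgt hge
          exact hproj_ne _ _ (ne_of_gt this) _ (hgraded a b _ (huS a ha) _ (hvT b hb))
  rw [← hcomp, h0, map_zero]

/-- Any element of the positive part is a finite sum of positive-degree homogeneous pieces. -/
theorem aux_decomp {x : L} (hx : x ∈ ⨆ (a : G) (_ : 0 < a), ℒ a) :
    ∃ (S : Finset G) (u : G → L), (∀ a, u a ∈ ℒ a) ∧ (∀ a ∈ S, 0 < a) ∧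
      (∀ a, u a ≠ 0 → a ∈ S) ∧ x = ∑ a ∈ S, u a := by
  classical
  rw [iSup_subtype'] at hx
  rw [Submodule.mem_iSup_iff_exists_finsupp] at hx
  obtain ⟨f, hf, hfsum⟩ := hx
  refine ⟨f.support.map ⟨Subtype.val, Subtype.val_injective⟩,
    fun a => if h : 0 < a then f ⟨a, h⟩ else 0, ?_, ?_, ?_, ?_⟩
  · intro a
    by_cases h : 0 < a
    · simpa [h] using hf ⟨a, h⟩
    · simp [h]
  · intro a ha
    rw [Finset.mem_map] at ha
    obtain ⟨i, _, rfl⟩ := ha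
    exact i.2
  · intro a ha
    by_cases h : 0 < a
    · rw [Finset.mem_map]
      refine ⟨⟨a, h⟩, ?_, rfl⟩
      rw [Finsupp.mem_support_iff]
      intro h0
      exact ha (by simp [h, h0])
    · exact absurd (by simp [h]) ha
  · rw [Finset.sum_map, ← hfsum, Finsupp.sum]
    exact Finset.sum_congr rfl fun i _ => by simp [i.2]

end Aux

/-- Let `𝔏 = ⊕_{α ∈ G} 𝔏_α` be a Lie algebra graded over a totally ordered abelian
group `G` (each `𝔏_α` a weight space, i.e. `⁅𝔏_α, 𝔏_β⁆ ⊆ 𝔏_{α+β}`).  If every pair of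
linearly independent homogeneous elements of positive degree has nonzero bracket,
then the positive part `𝔏⁺ = ⊕_{α > 0} 𝔏_α` is completely self-centralizing: any
two linearly independent elements `x, y ∈ 𝔏⁺` satisfy `⁅x, y⁆ ≠ 0`. -/
theorem positive_part_completely_self_centralizing
    {F : Type*} [Field F] {L : Type*} [LieRing L] [LieAlgebra F L]
    {G : Type*} [AddCommGroup G] [LinearOrder G] [IsOrderedAddMonoid G]
    (ℒ : G → Submodule F L)
    (hinternal : DirectSum.IsInternal ℒ)
    (hgraded : ∀ a b : G, ∀ x ∈ ℒ a, ∀ y ∈ ℒ b, ⁅x, y⁆ ∈ ℒ (a + b))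
    (hhom : ∀ (a b : G), 0 < a → 0 < b → ∀ x ∈ ℒ a, ∀ y ∈ ℒ b,
      LinearIndependent F ![x, y] → ⁅x, y⁆ ≠ 0)
    (x y : L)
    (hx : x ∈ ⨆ (a : G) (_ : 0 < a), ℒ a)
    (hy : y ∈ ⨆ (a : G) (_ : 0 < a), ℒ a)
    (hxy : LinearIndependent F ![x, y]) : ⁅x, y⁆ ≠ 0 := by
  classical
  obtain ⟨S, u, hu, hSpos, huS, hxeq⟩ := aux_decomp ℒ hx
  obtain ⟨T, v, hv, hTpos, hvT, hyeq⟩ := aux_decomp ℒ hy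
  have hx0 : x ≠ 0 := by have := hxy.ne_zero 0; simpa using this
  have hy0 : y ≠ 0 := by have := hxy.ne_zero 1; simpa using this
  obtain ⟨α, hαS, huα, hαmin⟩ := aux_min_exists hx0 hxeq
  obtain ⟨β, hβT, hvβ, hβmin⟩ := aux_min_exists hy0 hyeq
  by_cases hind : LinearIndependent F ![u α, v β]
  · rw [hxeq, hyeq]
    exact aux_key ℒ hinternal hgraded hhom (fun a _ => hu a) (fun b _ => hv b)
      hSpos hTpos hαS hβT hαmin hβmin hind
  · -- the lowest-degree components are linearly dependent
    rw [linearIndependent_fin2] at hind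
    push_neg at hind
    simp only [Matrix.cons_val_one, Matrix.head_cons, Matrix.cons_val_zero] at hind
    obtain ⟨c, hc⟩ := hind hvβ
    have hc0 : c ≠ 0 := fun h => huα (by rw [← hc, h, zero_smul])
    have hαβ : α = β := by
      by_contra hne
      exact huα (aux_disjoint' ℒ hinternal hne (hu α)
        (hc ▸ Submodule.smul_mem _ c (hv β)))
    subst hαβ
    -- consider z = x - c • y, which has strictly larger lowest degree
    set w : G → L := fun a => (if a ∈ S then u a else 0) - c • (if a ∈ T then v a else 0)
      with hwdef
    have hwval : ∀ a, w a = (if a ∈ S then u a else 0) - c • (if a ∈ T then v a else 0) :=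
      fun _ => rfl
    have hzeq : x - c • y = ∑ a ∈ S ∪ T, w a := by
      rw [Finset.sum_sub_distrib, ← Finset.smul_sum,
        Finset.sum_ite_mem, Finset.sum_ite_mem,
        Finset.union_inter_cancel_left, Finset.union_inter_cancel_right, hxeq, hyeq]
    have hw : ∀ a, w a ∈ ℒ a := by
      intro a
      rw [hwval]
      apply Submodule.sub_mem
      · by_cases h : a ∈ S
        · simpa [h] using hu a
        · simp [h]
      · apply Submodule.smul_mem
        by_cases h : a ∈ T
        · simpa [h] using hv a
        · simp [h]
    have hz0 : x - c • y ≠ 0 := by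
      intro h
      have hcx : c • y = x := (sub_eq_zero.mp h).symm
      rw [linearIndependent_fin2] at hxy
      simp only [Matrix.cons_val_one, Matrix.head_cons, Matrix.cons_val_zero] at hxy
      exact hxy.2 c hcx
    obtain ⟨α', hα'ST, hwα', hα'min⟩ := aux_min_exists hz0 hzeq
    have hwβ : w α = 0 := by
      rw [hwval, if_pos hαS, if_pos hβT, hc, sub_self]
    have hβα' : α < α' := by
      have hβle : α ≤ α' := by
        rcases Finset.mem_union.mp hα'ST with h | h
        · by_cases hu0 : u α' = 0
          · by_cases ht : α' ∈ T
            · refine hβmin α' ht ?_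
              intro hv0
              exact hwα' (by rw [hwval]; simp [hu0, hv0])
            · exact absurd (by rw [hwval]; simp [hu0, ht]) hwα'
          · exact hαmin α' h hu0
        · by_cases hv0 : v α' = 0
          · by_cases hs : α' ∈ S
            · refine hαmin α' hs ?_
              intro hu0
              exact hwα' (by rw [hwval]; simp [hu0, hv0])
            · exact absurd (by rw [hwval]; simp [hs, hv0]) hwα'
          · exact hβmin α' h hv0
      exact lt_of_le_of_ne hβle (fun h => hwα' (by rw [← h]; exact hwβ))
    -- apply the key lemma to z = x - c • y and y
    have hkey := aux_key ℒ hinternal hgraded hhom (S := S ∪ T) (T := T) (u := w) (v := v)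
      (fun a _ => hw a) (fun b _ => hv b)
      (fun a ha => by rcases Finset.mem_union.mp ha with h | h
                      exacts [hSpos a h, hTpos a h])
      hTpos hα'ST hβT hα'min hβmin
      ?_
    · intro h0
      apply hkey
      rw [← hzeq, ← hyeq]
      rw [sub_lie, smul_lie, lie_self, smul_zero, h0, sub_zero]
    · rw [linearIndependent_fin2]
      refine ⟨by simpa using hvβ, fun d hd => ?_⟩
      simp only [Matrix.cons_val_one, Matrix.head_cons, Matrix.cons_val_zero] at hd
      exact hwα' (aux_disjoint' ℒ hinternal (ne_of_gt hβα') (hw α')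
        (hd ▸ Submodule.smul_mem _ d (hv α)))
end

section
/- Let $M$ be a subgroup of a field $\mathbb{F}$ of characteristic $0$ together with an additive total order (sums of positive elements are positive), and let $V(M)$ be the generalized Virasoro algebra with basis $\{z\} \cup \{e_\alpha : \alpha \in M\}$ and relations $[e_\alpha, e_\beta] = (\beta - \alpha)e_{\alpha+\beta} + \beta^3 \delta_{\alpha, -\beta} z$ and $[z, e_\alpha] = 0$. Then the positive subalgebra $V(M)^+ = \mathrm{span}_\mathbb{F}\{e_\alpha : \alpha > 0\}$ is completely self-centralizing: any two linearly independent elements of $V(M)^+$ have nonzero bracket. -/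
open scoped Classical

private lemma exists_ord_aux {F : Type*} [Field F] [CharZero F] (M : AddSubgroup F)
    (U : Finset M) :
    ∃ (G : Type) (_ : AddCommGroup G) (_ : LinearOrder G) (_ : IsOrderedAddMonoid G) (g : M → G),
      (∀ a ∈ U, ∀ b ∈ U, g (a + b) = g a + g b) ∧
      (∀ a ∈ U, ∀ b ∈ U, g a = g b → a = b) := by
  classical
  have hsfin : (Set.Finite ((fun a : M => (a : F)) '' ↑U)) := U.finite_toSet.image _
  set W : Submodule ℚ F := Submodule.span ℚ ((fun a : M => (a : F)) '' ↑U) with hW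
  haveI : FiniteDimensional ℚ W := FiniteDimensional.span_of_finite ℚ hsfin
  set n := Module.finrank ℚ W with hn
  let B : Module.Basis (Fin n) ℚ W := Module.finBasis ℚ W
  have hmem : ∀ a : M, a ∈ U → (a : F) ∈ W := fun a ha =>
    Submodule.subset_span ⟨a, by simpa using ha, rfl⟩
  refine ⟨Lex (Fin n →₀ ℚ), inferInstance, inferInstance, inferInstance,
    fun a => if h : (a : F) ∈ W then toLex (B.repr ⟨(a : F), h⟩) else 0, ?_, ?_⟩
  · intro a ha b hb
    dsimp only
    have hab : ((a + b : M) : F) ∈ W := by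
      have : ((a + b : M) : F) = (a : F) + (b : F) := rfl
      rw [this]
      exact add_mem (hmem a ha) (hmem b hb)
    rw [dif_pos hab, dif_pos (hmem a ha), dif_pos (hmem b hb)]
    have h2 : (⟨((a + b : M) : F), hab⟩ : W) = ⟨(a : F), hmem a ha⟩ + ⟨(b : F), hmem b hb⟩ := by
      ext
      rfl
    rw [h2, map_add]
    rfl
  · intro a ha b hb hab
    dsimp only at hab
    rw [dif_pos (hmem a ha), dif_pos (hmem b hb)] at hab
    have h1 : B.repr ⟨(a : F), hmem a ha⟩ = B.repr ⟨(b : F), hmem b hb⟩ :=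
      toLex.injective hab
    have h2 := B.repr.injective h1
    have h3 : (a : F) = (b : F) := congrArg (fun w : W => (w : F)) h2
    exact Subtype.ext h3

/-- Let `M` be an additive subgroup of a field `F` of characteristic `0`, equipped
with an additive total order `lt` (a total strict order for which the sum of two
positive elements is positive).  Let `V(M)` be the generalized Virasoro algebra:
a Lie algebra over `F` with basis `{z} ∪ {e_α : α ∈ M}` and relations
`[e_α, e_β] = (β - α) e_{α+β} + β³ δ_{α,-β} z` and `[z, e_α] = 0`.  Then the positive
subalgebra `V(M)⁺ = span {e_α : α > 0}` is completely self-centralizing: any two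
linearly independent elements of `V(M)⁺` have nonzero bracket. -/
theorem generalized_virasoro_positive_part_self_centralizing
    {F : Type*} [Field F] [CharZero F] (M : AddSubgroup F)
    (lt : M → M → Prop)
    (lt_irrefl : ∀ a : M, ¬ lt a a)
    (lt_trans : ∀ a b c : M, lt a b → lt b c → lt a c)
    (lt_total : ∀ a b : M, a = b ∨ lt a b ∨ lt b a)
    (lt_add : ∀ a b : M, lt 0 a → lt 0 b → lt 0 (a + b))
    {L : Type*} [LieRing L] [LieAlgebra F L]
    (z : L) (e : M → L)
    (hbasis_indep : LinearIndependent F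
      (Sum.elim (fun _ : Unit => z) e : Unit ⊕ M → L))
    (hbasis_span : Submodule.span F
      (Set.range (Sum.elim (fun _ : Unit => z) e : Unit ⊕ M → L)) = ⊤)
    (hee : ∀ α β : M, ⁅e α, e β⁆ =
      ((β : F) - (α : F)) • e (α + β) + ((β : F) ^ 3 • if α = -β then z else 0))
    (hz : ∀ α : M, ⁅z, e α⁆ = 0)
    (x y : L)
    (hx : x ∈ Submodule.span F {w | ∃ α : M, lt 0 α ∧ w = e α})
    (hy : y ∈ Submodule.span F {w | ∃ α : M, lt 0 α ∧ w = e α})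
    (hxy : LinearIndependent F ![x, y]) : ⁅x, y⁆ ≠ 0 := by
  classical
  -- set up the basis
  have hspan' : ⊤ ≤ Submodule.span F
      (Set.range (Sum.elim (fun _ : Unit => z) e : Unit ⊕ M → L)) := hbasis_span.ge
  set b : Module.Basis (Unit ⊕ M) F L := Module.Basis.mk hbasis_indep hspan' with hbdef
  have hbe : ∀ α : M, b (Sum.inr α) = e α := fun α => by
    rw [hbdef]; exact Module.Basis.mk_apply _ _ _
  have hbz : b (Sum.inl ()) = z := by
    rw [hbdef]; exact Module.Basis.mk_apply _ _ _
  have hφe : ∀ γ α : M, b.coord (Sum.inr γ) (e α) = if α = γ then 1 else 0 := by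
    intro γ α
    rw [← hbe α, Module.Basis.coord_apply, Module.Basis.repr_self, Finsupp.single_apply]
    simp
  have hφz : ∀ γ : M, b.coord (Sum.inr γ) z = 0 := by
    intro γ
    rw [← hbz, Module.Basis.coord_apply, Module.Basis.repr_self, Finsupp.single_apply]
    simp
  -- sums and brackets
  have hsum_lie : ∀ (s : Finset M) (f : M → L) (w : L),
      ⁅∑ α ∈ s, f α, w⁆ = ∑ α ∈ s, ⁅f α, w⁆ := fun s f w =>
    map_sum (AddMonoidHom.mk' (fun u => ⁅u, w⁆) fun a c => add_lie a c w) f s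
  have hlie_sum : ∀ (s : Finset M) (f : M → L) (w : L),
      ⁅w, ∑ α ∈ s, f α⁆ = ∑ α ∈ s, ⁅w, f α⁆ := fun s f w =>
    map_sum (AddMonoidHom.mk' (fun u => ⁅w, u⁆) fun a c => lie_add w a c) f s
  -- coordinate of a bracket of two linear combinations
  have hbr : ∀ (l m : M →₀ F) (γ : M),
      b.coord (Sum.inr γ) ⁅Finsupp.linearCombination F e l, Finsupp.linearCombination F e m⁆ =
        ∑ α ∈ l.support, ∑ β ∈ m.support,
          (if α + β = γ then l α * m β * ((β : F) - (α : F)) else 0) := by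
    intro l m γ
    rw [Finsupp.linearCombination_apply, Finsupp.linearCombination_apply, Finsupp.sum,
      Finsupp.sum, hsum_lie, map_sum]
    refine Finset.sum_congr rfl fun α hα => ?_
    rw [smul_lie, map_smul, hlie_sum, map_sum, smul_eq_mul, Finset.mul_sum]
    refine Finset.sum_congr rfl fun β hβ => ?_
    rw [lie_smul, map_smul, smul_eq_mul, hee α β]
    simp only [map_add, map_smul, hφe, apply_ite (b.coord (Sum.inr γ)), hφz, map_zero,
      ite_self, smul_eq_mul, mul_zero, add_zero]
    split_ifs with h
    · ring
    · ring
  -- the key evaluation lemma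
  have heval : ∀ (l m : M →₀ F) (μ ν : M), μ ∈ l.support → ν ∈ m.support → μ ≠ ν →
      (∀ α ∈ l.support, ∀ β ∈ m.support, α + β = μ + ν → α = μ ∧ β = ν) →
      ⁅Finsupp.linearCombination F e l, Finsupp.linearCombination F e m⁆ ≠ 0 := by
    intro l m μ ν hμ hν hne huniq hzero
    have h1 := hbr l m (μ + ν)
    rw [hzero, map_zero] at h1
    have h2 : ∑ α ∈ l.support, ∑ β ∈ m.support,
        (if α + β = μ + ν then l α * m β * ((β : F) - (α : F)) else 0)
        = l μ * m ν * ((ν : F) - (μ : F)) := by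
      rw [Finset.sum_eq_single_of_mem μ hμ]
      · rw [Finset.sum_eq_single_of_mem ν hν]
        · rw [if_pos rfl]
        · intro β hβ hβν
          exact if_neg fun h => hβν (huniq μ hμ β hβ h).2
      · intro α hα hαμ
        exact Finset.sum_eq_zero fun β hβ => if_neg fun h => hαμ (huniq α hα β hβ h).1
    rw [h2] at h1
    have hlμ : l μ ≠ 0 := Finsupp.mem_support_iff.mp hμ
    have hmν : m ν ≠ 0 := Finsupp.mem_support_iff.mp hν
    have hc : ((ν : F) - (μ : F)) ≠ 0 :=
      sub_ne_zero.mpr fun h => hne (Subtype.ext h.symm)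
    exact mul_ne_zero (mul_ne_zero hlμ hmν) hc h1.symm
  -- representations of x and y
  have hrep : ∀ w : L, w ∈ Submodule.span F {w | ∃ α : M, lt 0 α ∧ w = e α} →
      ∃ c : M →₀ F, Finsupp.linearCombination F e c = w := by
    intro w hw
    have hw' : w ∈ Submodule.span F (Set.range e) := by
      refine Submodule.span_mono ?_ hw
      rintro v ⟨α, -, rfl⟩
      exact ⟨α, rfl⟩
    obtain ⟨c, hc⟩ := Finsupp.mem_span_range_iff_exists_finsupp.mp hw'
    exact ⟨c, by rw [Finsupp.linearCombination_apply]; exact hc⟩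
  obtain ⟨l, hl⟩ := hrep x hx
  obtain ⟨m, hm⟩ := hrep y hy
  -- independence facts
  have hind := linearIndependent_fin2.mp hxy
  have hy0 : y ≠ 0 := by simpa using hind.1
  have hx0 : x ≠ 0 := by
    intro h
    exact (by simpa using hind.2 0 : (0 : F) • y ≠ x) (by rw [zero_smul, h])
  have hnsmul : ∀ a : F, a • y ≠ x := by
    intro a
    simpa using hind.2 a
  have hlne : l.support.Nonempty :=
    Finsupp.support_nonempty_iff.mpr fun h => hx0 (by rw [← hl, h, map_zero])
  have hmne : m.support.Nonempty :=
    Finsupp.support_nonempty_iff.mpr fun h => hy0 (by rw [← hm, h, map_zero])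
  -- order machinery
  set U : Finset M := l.support ∪ m.support with hU
  obtain ⟨G, _instG, _instG2, _instG3, g, hgadd, hginj⟩ := exists_ord_aux M U
  obtain ⟨μ, hμ, hμmax⟩ := l.support.exists_max_image g hlne
  obtain ⟨ν, hν, hνmax⟩ := m.support.exists_max_image g hmne
  have hμU : μ ∈ U := Finset.mem_union_left _ hμ
  have hνU : ν ∈ U := Finset.mem_union_right _ hν
  by_cases hg : g μ = g ν
  · -- degenerate case : subtract a multiple of x from y
    have hμν : μ = ν := hginj μ hμU ν hνU hg
    set c : F := m μ / l μ with hcdef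
    set m' : M →₀ F := m - c • l with hm'def
    have hlμ : l μ ≠ 0 := Finsupp.mem_support_iff.mp hμ
    have hm'μ : m' μ = 0 := by
      rw [hm'def]
      simp only [Finsupp.sub_apply, Finsupp.smul_apply, smul_eq_mul, hcdef]
      rw [div_mul_cancel₀ _ hlμ, sub_self]
    have hy' : Finsupp.linearCombination F e m' = y - c • x := by
      rw [hm'def, map_sub, map_smul, hl, hm]
    have hm'0 : m' ≠ 0 := by
      intro h
      have h1 : y - c • x = 0 := by rw [← hy', h, map_zero]
      have h2 : y = c • x := by rwa [sub_eq_zero] at h1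
      rcases eq_or_ne c 0 with hc0 | hc0
      · exact hy0 (by rw [h2, hc0, zero_smul])
      · exact hnsmul c⁻¹ (by rw [h2, inv_smul_smul₀ hc0])
    have hsupp' : m'.support ⊆ U := by
      rw [hm'def]
      refine Finsupp.support_sub.trans (Finset.union_subset ?_ ?_)
      · exact Finset.subset_union_right
      · exact (Finsupp.support_smul).trans Finset.subset_union_left
    obtain ⟨ν', hν', hν'max⟩ :=
      m'.support.exists_max_image g (Finsupp.support_nonempty_iff.mpr hm'0)
    have hν'U : ν' ∈ U := hsupp' hν'
    have hμmaxU : ∀ a ∈ U, g a ≤ g μ := by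
      intro a ha
      rcases Finset.mem_union.mp ha with h | h
      · exact hμmax a h
      · rw [hg]; exact hνmax a h
    have hne : μ ≠ ν' := by
      rintro rfl
      exact Finsupp.mem_support_iff.mp hν' hm'μ
    have hgν'lt : g ν' < g μ :=
      lt_of_le_of_ne (hμmaxU ν' hν'U) fun h => hne (hginj μ hμU ν' hν'U h.symm)
    have huniq : ∀ α ∈ l.support, ∀ β ∈ m'.support, α + β = μ + ν' → α = μ ∧ β = ν' := by
      intro α hα β hβ habe
      have hαU : α ∈ U := Finset.mem_union_left _ hα
      have hβU : β ∈ U := hsupp' hβ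
      have hgsum : g α + g β = g μ + g ν' := by
        rw [← hgadd α hαU β hβU, ← hgadd μ hμU ν' hν'U, habe]
      have h1 : g α = g μ := by
        by_contra hne'
        have hlt : g α < g μ := lt_of_le_of_ne (hμmax α hα) hne'
        exact absurd hgsum (ne_of_lt (add_lt_add_of_lt_of_le hlt (hν'max β hβ)))
      have h2 : g β = g ν' := by
        rw [h1] at hgsum
        exact add_left_cancel hgsum
      exact ⟨hginj α hαU μ hμU h1, hginj β hβU ν' hν'U h2⟩
    have hkey := heval l m' μ ν' hμ hν' hne huniq
    have hrw : ⁅x, y⁆ =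
        ⁅Finsupp.linearCombination F e l, Finsupp.linearCombination F e m'⁆ := by
      rw [hl, hy', lie_sub, lie_smul, lie_self, smul_zero, sub_zero]
    rw [hrw]
    exact hkey
  · -- generic case
    have hne : μ ≠ ν := fun h => hg (by rw [h])
    have huniq : ∀ α ∈ l.support, ∀ β ∈ m.support, α + β = μ + ν → α = μ ∧ β = ν := by
      intro α hα β hβ habe
      have hαU : α ∈ U := Finset.mem_union_left _ hα
      have hβU : β ∈ U := Finset.mem_union_right _ hβ
      have hgsum : g α + g β = g μ + g ν := by
        rw [← hgadd α hαU β hβU, ← hgadd μ hμU ν hνU, habe]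
      have h1 : g α = g μ := by
        by_contra hne'
        have hlt : g α < g μ := lt_of_le_of_ne (hμmax α hα) hne'
        exact absurd hgsum (ne_of_lt (add_lt_add_of_lt_of_le hlt (hνmax β hβ)))
      have h2 : g β = g ν := by
        rw [h1] at hgsum
        exact add_left_cancel hgsum
      exact ⟨hginj α hαU μ hμU h1, hginj β hβU ν hνU h2⟩
    rw [← hl, ← hm]
    exact heval l m μ ν hμ hν hne huniq
end

section
/- Let $\mathfrak{L} = \bigoplus_{\alpha \in G}\mathfrak{L}_\alpha$ be a Lie algebra admitting a regular weakly triangular decomposition with $\mathfrak{L}^+$ completely self-centralizing. Then every derivation of $\mathfrak{L}$ is the sum of a derivation of degree 0 and an inner derivation: $\mathsf{Der}_\mathbb{F}(\mathfrak{L}) = \mathsf{Der}_\mathbb{F}(\mathfrak{L})_0 + \mathsf{Inn}_\mathbb{F}(\mathfrak{L})$. -/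
namespace WT

open scoped Classical

variable (F : Type*) [Field F] (L : Type*) [LieRing L] [LieAlgebra F L]

/-- The weight space of `L` relative to an abelian subalgebra `h`, for a linear
functional `α` on `h`: `{x ∈ L ∣ [z, x] = α(z) x for all z ∈ h}`. -/
def wt (h : LieSubalgebra F L) (α : Module.Dual F ↥h) : Submodule F L where
  carrier := {x | ∀ z : ↥h, ⁅(z : L), x⁆ = α z • x}
  add_mem' := by
    intro a b ha hb z
    rw [lie_add, ha z, hb z, smul_add]
  zero_mem' := by intro z; simp
  smul_mem' := by
    intro c x hx z
    rw [lie_smul, hx z, smul_comm]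

/-- A weakly triangular decomposition of a Lie algebra `L` over `F`:
`L = L⁻ ⊕ 𝔥 ⊕ L⁺` with `𝔥` abelian; `L⁺ ≠ 0` is `𝔥`-stable and decomposes into
weight spaces with weights in an additive semigroup `G₊ ⊆ 𝔥*` of nonzero
functionals; there is an anti-involution `σ` with `σ(L⁺) = L⁻` and `σ|𝔥 = id`;
and `G₊` carries a total order `lt` with `α < α + β` and compatible with
addition. -/
structure WTD where
  /-- the Cartan part `𝔥` -/
  h : LieSubalgebra F L
  /-- the positive part `L⁺` -/
  Lp : LieSubalgebra F L
  /-- the negative part `L⁻` -/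
  Lm : LieSubalgebra F L
  abelian : ∀ x ∈ h, ∀ y ∈ h, ⁅x, y⁆ = (0 : L)
  internal : DirectSum.IsInternal
    (![Lm.toSubmodule, h.toSubmodule, Lp.toSubmodule] : Fin 3 → Submodule F L)
  Lp_ne_bot : Lp ≠ ⊥
  h_Lp : ∀ z ∈ h, ∀ x ∈ Lp, ⁅z, x⁆ ∈ Lp
  /-- the set of positive weights `G₊ ⊆ 𝔥*` -/
  Gp : Set (Module.Dual F ↥h)
  Gp_add : ∀ a ∈ Gp, ∀ b ∈ Gp, a + b ∈ Gp
  Gp_ne_zero : ∀ a ∈ Gp, a ≠ 0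
  /-- `L⁺` decomposes into its weight spaces with weights in `G₊` -/
  wt_dec : Lp.toSubmodule = ⨆ α ∈ Gp, (Lp.toSubmodule ⊓ wt F L h α)
  wt_indep : iSupIndep (fun α : Gp => Lp.toSubmodule ⊓ wt F L h α)
  /-- the anti-involution -/
  σ : L →ₗ[F] L
  σ_invol : ∀ x, σ (σ x) = x
  σ_anti : ∀ x y : L, σ ⁅x, y⁆ = ⁅σ y, σ x⁆
  σ_Lp : σ '' Lp = (Lm : Set L)
  σ_h : ∀ x ∈ h, σ x = x
  /-- the total order on `G₊` -/
  lt : Module.Dual F ↥h → Module.Dual F ↥h → Prop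
  lt_irrefl : ∀ a ∈ Gp, ¬ lt a a
  lt_trans : ∀ a ∈ Gp, ∀ b ∈ Gp, ∀ c ∈ Gp, lt a b → lt b c → lt a c
  lt_total : ∀ a ∈ Gp, ∀ b ∈ Gp, a = b ∨ lt a b ∨ lt b a
  lt_add_self : ∀ a ∈ Gp, ∀ b ∈ Gp, lt a (a + b)
  lt_add_compat : ∀ a ∈ Gp, ∀ b ∈ Gp, ∀ c ∈ Gp, lt c b → lt (a + c) (a + b)

variable {F L}

/-- A weakly triangular decomposition is regular if all the relevant weight spaces
are finite-dimensional. -/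
def WTD.Regular (W : WTD F L) : Prop :=
  ∀ α : Module.Dual F ↥W.h, (α ∈ W.Gp ∨ α = 0 ∨ -α ∈ W.Gp) →
    FiniteDimensional F ↥(wt F L W.h α)

/-- A subspace is completely self-centralizing if any two linearly independent
elements of it have nonzero bracket. -/
def CSC (W : Submodule F L) : Prop :=
  ∀ x ∈ W, ∀ y ∈ W, LinearIndependent F ![x, y] → ⁅x, y⁆ ≠ 0

lemma mem_wt {h : LieSubalgebra F L} {α : Module.Dual F ↥h} {x : L} :
    x ∈ wt F L h α ↔ ∀ z : ↥h, ⁅(z : L), x⁆ = α z • x :=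
  Iff.rfl

/-- The family of all weight spaces, indexed by all linear functionals on `𝔥`. -/
def Vf (W : WTD F L) : Module.Dual F ↥W.h → Submodule F L := fun g => wt F L W.h g

lemma h_le_Vf0 (W : WTD F L) : W.h.toSubmodule ≤ Vf W 0 := by
  intro x hx z
  rw [W.abelian _ z.2 _ hx]
  simp

lemma sigma_mem_wt_neg (W : WTD F L) {α : Module.Dual F ↥W.h} {u : L}
    (hu : u ∈ wt F L W.h α) : W.σ u ∈ wt F L W.h (-α) := by
  intro z
  calc ⁅(z : L), W.σ u⁆ = ⁅W.σ (z : L), W.σ u⁆ := by rw [W.σ_h _ z.2]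
    _ = W.σ ⁅u, (z : L)⁆ := (W.σ_anti u (z : L)).symm
    _ = W.σ (-(α z • u)) := by rw [← lie_skew, hu z]
    _ = (-α) z • W.σ u := by rw [map_neg, map_smul]; simp

lemma sup_Vf (W : WTD F L) : ⨆ g, Vf W g = ⊤ := by
  rw [eq_top_iff, ← W.internal.submodule_iSup_eq_top]
  refine iSup_le fun i => ?_
  fin_cases i
  · -- L⁻
    show W.Lm.toSubmodule ≤ _
    have hmap : Submodule.map W.σ W.Lp.toSubmodule = W.Lm.toSubmodule := by
      apply SetLike.ext'
      rw [Submodule.map_coe]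
      exact W.σ_Lp
    rw [← hmap, W.wt_dec, Submodule.map_le_iff_le_comap]
    refine iSup₂_le fun α hα => ?_
    intro u hu
    exact Submodule.mem_comap.2 <| Submodule.mem_iSup_of_mem (-α) <|
      sigma_mem_wt_neg W hu.2
  · -- 𝔥
    show W.h.toSubmodule ≤ _
    exact (h_le_Vf0 W).trans (le_iSup _ 0)
  · -- L⁺
    show W.Lp.toSubmodule ≤ _
    rw [W.wt_dec]
    exact iSup₂_le fun α _ => inf_le_right.trans (le_iSup _ α)

lemma indep_Vf (W : WTD F L) : iSupIndep (Vf W) := by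
  haveI : LieModule.IsTrivial (↥W.h) (↥W.h) :=
    ⟨fun x m => by
      apply Subtype.ext
      rw [LieSubalgebra.coe_bracket]
      exact W.abelian _ x.2 _ m.2⟩
  have h1 : iSupIndep fun χ : ↥W.h → F =>
      (LieModule.genWeightSpace L χ : LieSubmodule F ↥W.h L).toSubmodule :=
    LieSubmodule.iSupIndep_toSubmodule.mpr
      (LieModule.iSupIndep_genWeightSpace F ↥W.h L)
  have h2 := h1.comp (f := fun g : Module.Dual F ↥W.h => ⇑g) DFunLike.coe_injective
  refine h2.mono fun g x hx => ?_
  have hxw : x ∈ LieModule.weightSpace L (⇑g) := by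
    rw [LieModule.mem_weightSpace]
    intro z
    exact hx z
  exact LieModule.weightSpace_le_genWeightSpace L ⇑g hxw

lemma internal_Vf (W : WTD F L) : DirectSum.IsInternal (Vf W) :=
  DirectSum.isInternal_submodule_of_iSupIndep_of_iSup_eq_top (indep_Vf W) (sup_Vf W)

/-- Let `L` have a regular weakly triangular decomposition with `L⁺` completely
self-centralizing.  Then every derivation of `L` is the sum of a derivation of
degree `0` (one preserving every weight space) and an inner derivation. -/
theorem derivation_eq_degree_zero_add_inner (W : WTD F L) (hreg : W.Regular)
    (hcsc : CSC W.Lp.toSubmodule) (δ : LieDerivation F L L) :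
    ∃ (δ₀ : LieDerivation F L L) (y : L),
      (∀ α : Module.Dual F ↥W.h, ∀ x ∈ wt F L W.h α, δ₀ x ∈ wt F L W.h α) ∧
      ∀ x : L, δ x = δ₀ x + ⁅y, x⁆ := by
  classical
  letI : DirectSum.Decomposition (Vf W) := (internal_Vf W).chooseDecomposition
  -- the projections onto the weight spaces
  let π : Module.Dual F ↥W.h → (L →ₗ[F] L) := fun g =>
    (Vf W g).subtype ∘ₗ
      (DirectSum.component F (Module.Dual F ↥W.h) (fun i => ↥(Vf W i)) g) ∘ₗ
      (DirectSum.decomposeLinearEquiv (Vf W)).toLinearMap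
  have π_apply : ∀ g v, π g v = ((DirectSum.decompose (Vf W) v) g : L) := fun g v => rfl
  have π_mem : ∀ g v, π g v ∈ Vf W g := fun g v => ((DirectSum.decompose (Vf W) v) g).2
  have π_same : ∀ g v, v ∈ Vf W g → π g v = v := fun g v hv =>
    DirectSum.decompose_of_mem_same _ hv
  have π_ne : ∀ {f g : Module.Dual F ↥W.h} (v : L), v ∈ Vf W f → f ≠ g → π g v = 0 :=
    fun v hv hfg => DirectSum.decompose_of_mem_ne _ hv hfg
  -- the projections intertwine the action of 𝔥
  have πC : ∀ (g : Module.Dual F ↥W.h) (z : ↥W.h) (u : L),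
      π g ⁅(z : L), u⁆ = g z • π g u := by
    intro g z u
    refine DirectSum.Decomposition.inductionOn (ℳ := Vf W)
      (motive := fun u => π g ⁅(z : L), u⁆ = g z • π g u) ?_ (fun {f} m => ?_) ?_ u
    · simp
    · show π g ⁅(z : L), (m : L)⁆ = g z • π g (m : L)
      have hm : (m : L) ∈ Vf W f := m.2
      have hlie : ⁅(z : L), (m : L)⁆ = f z • (m : L) := hm z
      by_cases hfg : f = g
      · subst hfg
        rw [hlie, map_smul, π_same _ _ hm]
      · rw [hlie, map_smul, π_ne _ hm hfg]; simp
    · intro a b ha hb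
      rw [lie_add, map_add, map_add, ha, hb, smul_add]
  -- symmetry relation coming from `δ ⁅z, w⁆ = 0` for `z w ∈ 𝔥`
  have πsym : ∀ (g : Module.Dual F ↥W.h) (z w : ↥W.h),
      g z • π g (δ (w : L)) = g w • π g (δ (z : L)) := by
    intro g z w
    have h0 : (0 : L) = ⁅δ (z : L), (w : L)⁆ + ⁅(z : L), δ (w : L)⁆ := by
      have h1 := δ.apply_lie_eq_add (z : L) (w : L)
      rw [W.abelian _ z.2 _ w.2, map_zero] at h1
      exact h1.trans (add_comm _ _)
    have h2 : π g ⁅δ (z : L), (w : L)⁆ = -(g w • π g (δ (z : L))) := by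
      rw [← lie_skew, map_neg, πC g w (δ (z : L))]
    have h4 : (0 : L) = -(g w • π g (δ (z : L))) + g z • π g (δ (w : L)) := by
      rw [← h2, ← πC g z (δ (w : L)), ← map_add, ← h0, map_zero]
    have h5 : g z • π g (δ (w : L)) - g w • π g (δ (z : L)) = 0 := by
      rw [sub_eq_add_neg, add_comm]
      exact h4.symm
    exact sub_eq_zero.mp h5
  -- choose, for every nonzero functional, an element of 𝔥 where it equals 1
  have exz : ∀ g : Module.Dual F ↥W.h, g ≠ 0 → ∃ z : ↥W.h, g z = 1 := by
    intro g hg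
    obtain ⟨z, hz⟩ : ∃ z, g z ≠ 0 := by
      by_contra hc
      push_neg at hc
      exact hg (LinearMap.ext hc)
    exact ⟨(g z)⁻¹ • z, by rw [map_smul, smul_eq_mul, inv_mul_cancel₀ hz]⟩
  let Y : Module.Dual F ↥W.h → L := fun g =>
    if hg : g = 0 then 0 else π g (δ ((exz g hg).choose : L))
  have Y_zero : Y 0 = 0 := dif_pos rfl
  have Y_mem : ∀ g, Y g ∈ Vf W g := by
    intro g
    by_cases hg : g = 0
    · subst hg; rw [Y_zero]; exact zero_mem _
    · show (if hg : g = 0 then 0 else π g (δ ((exz g hg).choose : L))) ∈ Vf W g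
      rw [dif_neg hg]
      exact π_mem _ _
  have Y_spec : ∀ (g : Module.Dual F ↥W.h), g ≠ 0 → ∀ z : ↥W.h,
      π g (δ (z : L)) = g z • Y g := by
    intro g hg z
    have hz₀ : g (exz g hg).choose = 1 := (exz g hg).choose_spec
    have h2 := πsym g (exz g hg).choose z
    rw [hz₀, one_smul] at h2
    rw [h2]
    congr 1
    show π g (δ ((exz g hg).choose : L)) =
      (if hg : g = 0 then 0 else π g (δ ((exz g hg).choose : L)))
    rw [dif_neg hg]
  -- 𝔥 is finite-dimensional
  haveI hfin0 : FiniteDimensional F ↥(wt F L W.h 0) := hreg 0 (Or.inr (Or.inl rfl))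
  haveI hfinh : FiniteDimensional F ↥W.h := by
    have h1 : FiniteDimensional F ↥(W.h.toSubmodule) :=
      Submodule.finiteDimensional_of_le (S₂ := wt F L W.h 0) (h_le_Vf0 W)
    exact h1
  -- only finitely many nonzero `Y g`
  let b := Module.finBasis F ↥W.h
  have hSfin : {g : Module.Dual F ↥W.h | Y g ≠ 0}.Finite := by
    apply Set.Finite.subset (Set.finite_iUnion fun i : Fin (Module.finrank F ↥W.h) =>
      (DFinsupp.support (DirectSum.decompose (Vf W) (δ (b i : L)))).finite_toSet)
    intro g hg
    have hg0 : g ≠ 0 := by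
      rintro rfl
      exact hg Y_zero
    obtain ⟨i, hi⟩ : ∃ i, g (b i) ≠ 0 := by
      by_contra hc
      push_neg at hc
      exact hg0 (b.ext fun i => by rw [hc i]; simp)
    refine Set.mem_iUnion.2 ⟨i, Finset.mem_coe.2 (DFinsupp.mem_support_iff.2 ?_)⟩
    intro hzero
    have h1 : π g (δ ((b i : ↥W.h) : L)) = g (b i) • Y g := Y_spec g hg0 (b i)
    rw [π_apply, hzero] at h1
    have h2 : Y g = 0 := by
      rcases smul_eq_zero.mp h1.symm with h | h
      · exact absurd h hi
      · exact h
    exact hg h2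
  set S : Finset (Module.Dual F ↥W.h) := hSfin.toFinset with hS
  set y : L := -(∑ f ∈ S, Y f) with hy
  set δ₀ : LieDerivation F L L := δ - LieDerivation.ad F L y with hδ₀
  have δ₀_apply : ∀ v, δ₀ v = δ v - ⁅y, v⁆ := by
    intro v
    rw [hδ₀, LieDerivation.sub_apply]
    congr 1
    simp [LieAlgebra.ad_apply]
  -- elements whose nonzero-weight components all vanish lie in the zero weight space
  have mem_V0 : ∀ v : L, (∀ g, g ≠ 0 → π g v = 0) → v ∈ Vf W 0 := by
    intro v hv
    rw [← DirectSum.sum_support_decompose (Vf W) v]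
    refine Submodule.sum_mem _ fun g hgs => ?_
    rcases eq_or_ne g 0 with rfl | hg
    · exact SetLike.coe_mem _
    · have h1 := hv g hg
      rw [π_apply] at h1
      rw [h1]
      exact zero_mem _
  -- the corrected derivation sends 𝔥 into the zero weight space
  have hδ₀h : ∀ z : ↥W.h, δ₀ (z : L) ∈ Vf W 0 := by
    intro z
    apply mem_V0
    intro g hg
    have hmain : π g ⁅y, (z : L)⁆ = g z • Y g := by
      have hy2 : ⁅y, (z : L)⁆ = ∑ f ∈ S, ⁅(z : L), Y f⁆ := by
        rw [hy, neg_lie, ← lie_skew]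
        rw [← LieAlgebra.ad_apply (R := F) (x := (z : L)), map_sum]
        simp [LieAlgebra.ad_apply]
      rw [hy2, map_sum]
      by_cases hgS : g ∈ S
      · rw [Finset.sum_eq_single_of_mem g hgS]
        · rw [πC g z (Y g), π_same _ _ (Y_mem g)]
        · intro f hfS hfg
          have hYf : ⁅(z : L), Y f⁆ = f z • Y f := (Y_mem f) z
          rw [hYf, map_smul, π_ne _ (Y_mem f) hfg, smul_zero]
      · have hYg : Y g = 0 := by
          by_contra hC
          exact hgS (hSfin.mem_toFinset.2 hC)
        rw [hYg, smul_zero]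
        refine Finset.sum_eq_zero fun f hfS => ?_
        have hfg : f ≠ g := fun h => hgS (h ▸ hfS)
        have hYf : ⁅(z : L), Y f⁆ = f z • Y f := (Y_mem f) z
        rw [hYf, map_smul, π_ne _ (Y_mem f) hfg, smul_zero]
    rw [δ₀_apply, map_sub, hmain, Y_spec g hg z, sub_self]
  -- assemble the answer
  refine ⟨δ₀, y, ?_, ?_⟩
  · intro g x hx
    intro z
    have hc0 : δ₀ (z : L) ∈ Vf W 0 := hδ₀h z
    -- first: `⁅δ₀ z, x⁆` lies in the `g` weight space
    have hcx_wt : ⁅δ₀ (z : L), x⁆ ∈ Vf W g := by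
      intro w
      have hcw : ⁅(w : L), δ₀ (z : L)⁆ = 0 := by
        have h1 := hc0 w
        simpa using h1
      calc ⁅(w : L), ⁅δ₀ (z : L), x⁆⁆
          = ⁅⁅(w : L), δ₀ (z : L)⁆, x⁆ + ⁅δ₀ (z : L), ⁅(w : L), x⁆⁆ :=
            leibniz_lie _ _ _
        _ = ⁅δ₀ (z : L), g w • x⁆ := by rw [hcw, zero_lie, zero_add, hx w]
        _ = g w • ⁅δ₀ (z : L), x⁆ := lie_smul _ _ _
    have hder : ⁅(z : L), δ₀ x⁆ = g z • δ₀ x - ⁅δ₀ (z : L), x⁆ := by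
      have h1 := δ₀.apply_lie_eq_add (z : L) x
      rw [hx z, map_smul] at h1
      rw [eq_sub_iff_add_eq]
      exact h1.symm
    have hzero : ⁅δ₀ (z : L), x⁆ = 0 := by
      have h2 := πC g z (δ₀ x)
      rw [hder, map_sub, map_smul, π_same _ _ hcx_wt] at h2
      exact sub_eq_self.mp h2
    rw [hder, hzero, sub_zero]
  · intro x
    rw [δ₀_apply]
    abel

end WT
end

section
/- Let $\mathfrak{g} = \bigoplus_{n\in\mathbb{Z}}\mathfrak{g}_n$ be a $\mathbb{Z}$-graded Lie algebra. Suppose $x_1,\ldots,x_k$ are homogeneous elements with $x_i \in \mathfrak{g}_{n_i}$, and set $M = \max\{|n_1|,\ldots,|n_k|\}$. If $n_1 + \cdots + n_k \geq 0$, then the iterated bracket $[x_1,[x_2,\ldots,[x_{k-1},x_k]\ldots]]$ lies in the subalgebra generated by $\bigoplus_{0 \le i \le M} \mathfrak{g}_i$; if $n_1+\cdots+n_k \leq 0$, it lies in the subalgebra generated by $\bigoplus_{-M \le i \le 0} \mathfrak{g}_i$. -/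
/-- The iterated bracket `[x₁, [x₂, …, [x_{k-1}, x_k]…]]` of a nonempty list of
elements of a Lie algebra, given as a head `x` and tail `l`. -/
def iterBracket {L : Type*} [LieRing L] : L → List L → L
  | x, [] => x
  | x, y :: l => ⁅x, iterBracket y l⁆

section Aux

variable {F : Type*} [Field F] {L : Type*} [LieRing L] [LieAlgebra F L]

/-- iterated bracket over a list of (element, degree) pairs. -/
def ibr : List (L × ℤ) → L
  | [] => 0
  | [p] => p.1
  | p :: q :: l => ⁅p.1, ibr (q :: l)⁆

lemma ibr_cons_ne (p : L × ℤ) (l : List (L × ℤ)) (h : l ≠ []) :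
    ibr (p :: l) = ⁅p.1, ibr l⁆ := by
  cases l with
  | nil => exact absurd rfl h
  | cons q l => rfl

lemma ibr_merge (m : ℤ) : ∀ (u : List (L × ℤ)) (a b : L × ℤ),
    ibr (u ++ [a, b]) = ibr (u ++ [(⁅a.1, b.1⁆, m)]) := by
  intro u
  induction u with
  | nil => intro a b; rfl
  | cons p u ih =>
    intro a b
    rw [List.cons_append, List.cons_append, ibr_cons_ne _ _ (by simp),
      ibr_cons_ne _ _ (by simp), ih]

lemma ibr_jacobi : ∀ (u : List (L × ℤ)) (a b : L × ℤ) (v : List (L × ℤ)), v ≠ [] →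
    ibr (u ++ a :: b :: v) =
      ibr (u ++ (⁅a.1, b.1⁆, a.2 + b.2) :: v) + ibr (u ++ b :: a :: v) := by
  intro u
  induction u with
  | nil =>
    intro a b v hv
    simp only [List.nil_append]
    rw [ibr_cons_ne _ _ (by simp), ibr_cons_ne _ _ hv, ibr_cons_ne _ _ hv,
      ibr_cons_ne _ _ (by simp), ibr_cons_ne _ _ hv]
    exact leibniz_lie _ _ _
  | cons p u ih =>
    intro a b v hv
    rw [List.cons_append, List.cons_append, List.cons_append,
      ibr_cons_ne _ _ (by simp), ibr_cons_ne _ _ (by simp),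
      ibr_cons_ne _ _ (by simp), ih _ _ _ hv, lie_add]

lemma ibr_mem_subalgebra (K : LieSubalgebra F L) :
    ∀ w : List (L × ℤ), w ≠ [] → (∀ p ∈ w, p.1 ∈ K) → ibr w ∈ K := by
  intro w
  induction w with
  | nil => intro h; exact absurd rfl h
  | cons p l ih =>
    intro _ hmem
    cases l with
    | nil => exact hmem p (by simp)
    | cons q l =>
      rw [ibr_cons_ne _ _ (by simp)]
      exact K.lie_mem (hmem p (by simp)) (ih (by simp) (fun r hr => hmem r (by simp [hr])))

/-- decompose at the rightmost negative-degree entry. -/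
lemma decomp (w : List (L × ℤ)) :
    (∀ p ∈ w, 0 ≤ p.2) ∨
      ∃ u a v, w = u ++ a :: v ∧ a.2 < 0 ∧ ∀ p ∈ v, 0 ≤ p.2 := by
  induction w with
  | nil => left; simp
  | cons p l ih =>
    rcases ih with h | ⟨u, a, v, rfl, ha, hv⟩
    · by_cases hp : 0 ≤ p.2
      · left; intro q hq
        rcases List.mem_cons.1 hq with rfl | hq
        · exact hp
        · exact h q hq
      · right; exact ⟨[], p, l, rfl, by omega, h⟩
    · right; exact ⟨p :: u, a, v, rfl, ha, hv⟩

/-- length of maximal suffix of nonneg degrees. -/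
def rM (w : List (L × ℤ)) : ℕ :=
  (w.reverse.takeWhile (fun p => decide (0 ≤ p.2))).length

lemma rM_le (w : List (L × ℤ)) : rM w ≤ w.length := by
  have := List.Sublist.length_le (List.takeWhile_sublist (fun p : L × ℤ => decide (0 ≤ p.2)) (l := w.reverse))
  simpa [rM] using this

omit [Field F] [LieAlgebra F L] in
lemma takeWhile_all_append (a : L × ℤ) (ha : a.2 < 0) :
    ∀ (s rest : List (L × ℤ)), (∀ p ∈ s, 0 ≤ p.2) →
      (s ++ a :: rest).takeWhile (fun p => decide (0 ≤ p.2)) = s := by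
  intro s
  induction s with
  | nil =>
    intro rest _
    simp [List.takeWhile_cons, ha, show ¬ (0 ≤ a.2) by omega]
  | cons p s ih =>
    intro rest hs
    have hp : (0 ≤ p.2) := hs p (by simp)
    simp [List.takeWhile_cons, hp, ih rest (fun q hq => hs q (by simp [hq]))]

lemma rM_eq (u : List (L × ℤ)) (a : L × ℤ) (v : List (L × ℤ)) (ha : a.2 < 0)
    (hv : ∀ p ∈ v, 0 ≤ p.2) : rM (u ++ a :: v) = v.length := by
  have : (u ++ a :: v).reverse = v.reverse ++ a :: u.reverse := by simp
  rw [rM, this, takeWhile_all_append a ha _ _ (by intro p hp; exact hv p (by simpa using hp))]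
  simp

theorem main_aux (g : ℤ → Submodule F L)
    (hg : ∀ m n : ℤ, ∀ x ∈ g m, ∀ y ∈ g n, ⁅x, y⁆ ∈ g (m + n)) (M : ℤ) :
    ∀ N : ℕ, ∀ w : List (L × ℤ), w.length * w.length + rM w < N → w ≠ [] →
      (∀ p ∈ w, p.1 ∈ g p.2 ∧ (0 ≤ p.2 → p.2 ≤ M)) →
      0 ≤ (w.map Prod.snd).sum →
      ibr w ∈ LieSubalgebra.lieSpan F L (⋃ i ∈ Set.Icc (0 : ℤ) M, (g i : Set L)) := by
  intro N
  induction N with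
  | zero => intro w h; omega
  | succ N ih =>
    intro w hμ hne hGood hsum
    rcases decomp w with hall | ⟨u, a, v, rfl, hneg, hv⟩
    · -- all degrees nonnegative: every entry lies in the generating set
      refine ibr_mem_subalgebra _ w hne ?_
      intro p hp
      exact LieSubalgebra.subset_lieSpan
        (Set.mem_biUnion (show p.2 ∈ Set.Icc (0:ℤ) M from
          ⟨hall p hp, (hGood p hp).2 (hall p hp)⟩) ((hGood p hp).1))
    · cases v with
      | nil =>
        -- last entry has negative degree
        rcases List.eq_nil_or_concat u with rfl | ⟨u', b, rfl⟩
        · -- single negative entry: contradicts nonneg sum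
          simp only [List.nil_append, List.map_cons, List.map_nil, List.sum_cons,
            List.sum_nil, add_zero] at hsum
          omega
        · have hb : b ∈ u'.concat b ++ [a] := by simp
          have ha' : a ∈ u'.concat b ++ [a] := by simp
          have key : ibr (u'.concat b ++ [a]) = ibr (u' ++ [(⁅b.1, a.1⁆, b.2 + a.2)]) := by
            rw [List.concat_eq_append, List.append_assoc]
            exact ibr_merge (b.2 + a.2) u' b a
          rw [key]
          refine ih (u' ++ [(⁅b.1, a.1⁆, b.2 + a.2)]) ?_ (by simp) ?_ ?_
          · have h1 : rM (u' ++ [(⁅b.1, a.1⁆, b.2 + a.2)]) ≤ u'.length + 1 := by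
              have := rM_le (u' ++ [(⁅b.1, a.1⁆, b.2 + a.2)]); simpa using this
            have h2 : (u'.concat b ++ [a]).length = u'.length + 2 := by simp
            rw [h2] at hμ
            simp only [List.length_append, List.length_cons, List.length_nil]
            nlinarith
          · intro p hp
            rcases List.mem_append.1 hp with hp | hp
            · exact hGood p (by simp [hp])
            · have hpe : p = (⁅b.1, a.1⁆, b.2 + a.2) := by simpa using hp
              subst hpe
              refine ⟨hg _ _ _ (hGood b hb).1 _ (hGood a ha').1, ?_⟩
              intro h0
              have hbM : b.2 ≤ M := (hGood b hb).2 (by omega)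
              simp only; omega
          · have : ((u'.concat b ++ [a]).map Prod.snd).sum =
                ((u' ++ [(⁅b.1, a.1⁆, b.2 + a.2)]).map Prod.snd).sum := by
              simp; try omega
            rw [← this]; exact hsum
      | cons b v' =>
        have hb : b ∈ u ++ a :: b :: v' := by simp
        have ha' : a ∈ u ++ a :: b :: v' := by simp
        have hbpos : 0 ≤ b.2 := hv b (by simp)
        have hbM : b.2 ≤ M := (hGood b hb).2 hbpos
        have hmerged : ∀ p ∈ u ++ (⁅a.1, b.1⁆, a.2 + b.2) :: v',
            p.1 ∈ g p.2 ∧ (0 ≤ p.2 → p.2 ≤ M) := by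
          intro p hp
          rcases List.mem_append.1 hp with hp | hp
          · exact hGood p (by simp [hp])
          · rcases List.mem_cons.1 hp with rfl | hp
            · refine ⟨hg _ _ _ (hGood a ha').1 _ (hGood b hb).1, ?_⟩
              intro _; simp only; omega
            · exact hGood p (by simp [hp])
        have hmsum : 0 ≤ ((u ++ (⁅a.1, b.1⁆, a.2 + b.2) :: v').map Prod.snd).sum := by
          have : ((u ++ (⁅a.1, b.1⁆, a.2 + b.2) :: v').map Prod.snd).sum =
              ((u ++ a :: b :: v').map Prod.snd).sum := by simp; try omega
          rw [this]; exact hsum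
        have hmlen : (u ++ (⁅a.1, b.1⁆, a.2 + b.2) :: v').length + 1 =
            (u ++ a :: b :: v').length := by simp; omega
        have hmμ : (u ++ (⁅a.1, b.1⁆, a.2 + b.2) :: v').length *
            (u ++ (⁅a.1, b.1⁆, a.2 + b.2) :: v').length +
            rM (u ++ (⁅a.1, b.1⁆, a.2 + b.2) :: v') < N := by
          have h1 := rM_le (u ++ (⁅a.1, b.1⁆, a.2 + b.2) :: v')
          set k1 := (u ++ (⁅a.1, b.1⁆, a.2 + b.2) :: v').length with hk1
          rw [← hmlen] at hμ
          nlinarith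
        cases v' with
        | nil =>
          -- merge the final pair (a, b)
          have key : ibr (u ++ [a, b]) = ibr (u ++ [(⁅a.1, b.1⁆, a.2 + b.2)]) :=
            ibr_merge (a.2 + b.2) u a b
          rw [key]
          exact ih _ hmμ (by simp) hmerged hmsum
        | cons c v'' =>
          have hv'' : ∀ p ∈ c :: v'', 0 ≤ p.2 := fun p hp => hv p (by simp [List.mem_cons.1 hp])
          rw [ibr_jacobi u a b (c :: v'') (by simp)]
          have hswapμ : (u ++ b :: a :: c :: v'').length *
              (u ++ b :: a :: c :: v'').length + rM (u ++ b :: a :: c :: v'') < N := by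
            have hr2 : rM (u ++ b :: a :: c :: v'') = (c :: v'').length := by
              have : u ++ b :: a :: c :: v'' = (u ++ [b]) ++ a :: (c :: v'') := by simp
              rw [this]; exact rM_eq _ a _ hneg hv''
            have hr1 : rM (u ++ a :: b :: c :: v'') = (b :: c :: v'').length :=
              rM_eq u a _ hneg hv
            have hlen2 : (u ++ b :: a :: c :: v'').length = (u ++ a :: b :: c :: v'').length := by
              simp
            rw [hr2, hlen2]
            rw [hr1] at hμ
            simp only [List.length_cons] at *
            omega
          refine (LieSubalgebra.lieSpan F L _).add_mem
            (ih _ hmμ (by simp) hmerged hmsum)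
            (ih _ hswapμ (by simp) ?_ ?_)
          · intro p hp
            rcases List.mem_append.1 hp with hp | hp
            · exact hGood p (by simp [hp])
            · rcases List.mem_cons.1 hp with rfl | hp
              · exact hGood p hb
              · rcases List.mem_cons.1 hp with rfl | hp
                · exact hGood p ha'
                · exact hGood p (by simp [hp])
          · have : ((u ++ b :: a :: c :: v'').map Prod.snd).sum =
                ((u ++ a :: b :: c :: v'').map Prod.snd).sum := by simp; try omega
            rw [this]; exact hsum

lemma ibr_eq_iterBracket :
    ∀ (l : List L) (ns : List ℤ) (x : L) (n : ℤ), l.length = ns.length →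
      ibr ((x, n) :: l.zip ns) = iterBracket x l := by
  intro l
  induction l with
  | nil => intro ns x n _; rfl
  | cons y l ih =>
    intro ns x n hlen
    cases ns with
    | nil => simp at hlen
    | cons m ns =>
      have h1 : l.zip ns ≠ [] ∨ l.zip ns = [] := (em _).symm
      rw [List.zip_cons_cons, ibr_cons_ne _ _ (by simp), ih ns y m (by simpa using hlen)]
      rfl

end Aux

lemma sum_map_neg' (ns : List ℤ) : (ns.map (fun i => -i)).sum = -ns.sum := by
  induction ns with
  | nil => simp
  | cons m ns ih => simp [ih]; ring

/-- Let `𝔤 = ⊕_{n ∈ ℤ} 𝔤_n` be a `ℤ`-graded Lie algebra and let `x₁, …, x_k` be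
homogeneous elements with `x_i ∈ 𝔤_{n_i}`, and `M = max {|n₁|, …, |n_k|}`.  If
`n₁ + ⋯ + n_k ≥ 0` then `[x₁,[x₂,…,[x_{k-1},x_k]…]]` lies in the subalgebra
generated by `⊕_{0 ≤ i ≤ M} 𝔤_i`; if `n₁ + ⋯ + n_k ≤ 0` it lies in the subalgebra
generated by `⊕_{-M ≤ i ≤ 0} 𝔤_i`. -/
theorem iterBracket_mem_span_of_graded
    {F : Type*} [Field F] {L : Type*} [LieRing L] [LieAlgebra F L]
    (g : ℤ → Submodule F L)
    (hgraded : ∀ m n : ℤ, ∀ x ∈ g m, ∀ y ∈ g n, ⁅x, y⁆ ∈ g (m + n))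
    (x : L) (l : List L) (n : ℤ) (ns : List ℤ)
    (hx : x ∈ g n) (hl : List.Forall₂ (fun z m => z ∈ g m) l ns)
    (M : ℤ)
    (hMmem : M ∈ (n :: ns).map (fun i => |i|))
    (hMub : ∀ m ∈ (n :: ns).map (fun i => |i|), m ≤ M) :
    (0 ≤ n + ns.sum →
      iterBracket x l ∈
        LieSubalgebra.lieSpan F L (⋃ i ∈ Set.Icc (0 : ℤ) M, (g i : Set L))) ∧
    (n + ns.sum ≤ 0 →
      iterBracket x l ∈
        LieSubalgebra.lieSpan F L (⋃ i ∈ Set.Icc (-M) (0 : ℤ), (g i : Set L))) := by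
  have hlen : l.length = ns.length := hl.length_eq
  have habs : ∀ m ∈ n :: ns, -M ≤ m ∧ m ≤ M := by
    intro m hm
    exact abs_le.mp (hMub |m| (List.mem_map.2 ⟨m, hm, rfl⟩))
  have hzip : ∀ p ∈ l.zip ns, p.1 ∈ g p.2 := by
    rintro ⟨a, b⟩ hp
    exact (List.forall₂_iff_zip.1 hl).2 hp
  constructor
  · intro hsum
    rw [← ibr_eq_iterBracket l ns x n hlen]
    refine main_aux g hgraded M
      (((x, n) :: l.zip ns).length * ((x, n) :: l.zip ns).length + rM ((x, n) :: l.zip ns) + 1)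
      _ (by omega) (by simp) ?_ ?_
    · intro p hp
      rcases List.mem_cons.1 hp with rfl | hp
      · have := habs n (by simp)
        exact ⟨hx, fun _ => this.2⟩
      · obtain ⟨p1, p2⟩ := p
        have h2 : p2 ∈ ns := (List.of_mem_zip hp).2
        have := habs p2 (by simp [h2])
        exact ⟨hzip (p1, p2) hp, fun _ => this.2⟩
    · have : (((x, n) :: l.zip ns).map Prod.snd).sum = n + ns.sum := by
        simp [List.map_snd_zip (le_of_eq hlen.symm)]
      rw [this]; exact hsum
  · intro hsum
    have hlen' : l.length = (ns.map (fun i => -i)).length := by simpa using hlen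
    rw [← ibr_eq_iterBracket l (ns.map (fun i => -i)) x (-n) hlen']
    have hg' : ∀ m' n' : ℤ, ∀ x' ∈ g (-m'), ∀ y' ∈ g (-n'), ⁅x', y'⁆ ∈ g (-(m' + n')) := by
      intro m' n' x' hx' y' hy'
      have h := hgraded (-m') (-n') x' hx' y' hy'
      have e : -m' + -n' = -(m' + n') := by ring
      rwa [e] at h
    have hmem := main_aux (fun j => g (-j)) hg' M
      (((x, -n) :: l.zip (ns.map (fun i => -i))).length *
        ((x, -n) :: l.zip (ns.map (fun i => -i))).length +
        rM ((x, -n) :: l.zip (ns.map (fun i => -i))) + 1)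
      ((x, -n) :: l.zip (ns.map (fun i => -i))) (by omega) (by simp) ?_ ?_
    · have hset : (⋃ i ∈ Set.Icc (0 : ℤ) M, (g (-i) : Set L)) =
          ⋃ i ∈ Set.Icc (-M) (0 : ℤ), (g i : Set L) := by
        ext z
        simp only [Set.mem_iUnion, Set.mem_Icc, exists_prop]
        constructor
        · rintro ⟨i, ⟨h0, hM⟩, hz⟩; exact ⟨-i, ⟨by omega, by omega⟩, hz⟩
        · rintro ⟨i, ⟨h0, hM⟩, hz⟩; exact ⟨-i, ⟨by omega, by omega⟩, by simpa using hz⟩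
      rw [hset] at hmem
      exact hmem
    · intro p hp
      rcases List.mem_cons.1 hp with rfl | hp
      · have := habs n (by simp)
        refine ⟨by simpa using hx, fun _ => by simp only; omega⟩
      · rw [List.zip_map_right] at hp
        obtain ⟨q, hq, rfl⟩ := List.mem_map.1 hp
        have h2 : q.2 ∈ ns := (List.of_mem_zip (by simpa using hq)).2
        have := habs q.2 (by simp [h2])
        refine ⟨by simpa using hzip (q.1, q.2) (by simpa using hq), ?_⟩
        intro _
        simp only [Prod.map] at *
        omega
    · have : (((x, -n) :: l.zip (ns.map (fun i => -i))).map Prod.snd).sum =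
          -(n + ns.sum) := by
        rw [List.map_cons, List.sum_cons,
          List.map_snd_zip (le_of_eq hlen'.symm), sum_map_neg']
        ring
      rw [this]; omega
end
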